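/- With notation of the previous statement and ‖x_i‖ ≤ √M for all i (entries in {-1,0,1}), if additionally ∑_{i∈S} C'_{i,j} = |S|/N for all j, then xᵀΩ_s C CᵀΩ_s x ≤ ρ² · M · |S|²/N. -/

import Mathlib

open Matrix

open Kronecker

/-- Bound on the block quadratic form: under nonnegativity and the uniformity
assumption, xᵀΩ_s C CᵀΩ_s x ≤ ρ²M|S|²/N for sign-vector blocks x. -/
theorem block_quadratic_form_bound (N M : ℕ) (C' : Matrix (Fin N) (Fin N) ℝ)
    (hnn : ∀ i j, 0 ≤ C' i j)
    (hrow : ∀ i, ∑ j, C' i j = 1) (hcol : ∀ j, ∑ i, C' i j = 1)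
    (S : Finset (Fin N)) (ρ : ℝ) (hρ : 0 < ρ)
    (hunif : ∀ j, ∑ i ∈ S, C' i j = (S.card : ℝ) / N)
    (x : Fin N → Fin M → ℝ) (hx : ∀ i a, x i a ∈ ({-1, 0, 1} : Set ℝ))
    (C Ωs : Matrix (Fin N × Fin M) (Fin N × Fin M) ℝ)
    (hC : C = C' ⊗ₖ (1 : Matrix (Fin M) (Fin M) ℝ))
    (hΩ : Ωs = ρ • ((Matrix.diagonal (fun i => if i ∈ S then (1 : ℝ) else 0))
        ⊗ₖ (1 : Matrix (Fin M) (Fin M) ℝ)))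
    (v : Fin N × Fin M → ℝ) (hv : ∀ p, v p = x p.1 p.2) :
    dotProduct v ((Ωs * C * Cᵀ * Ωs).mulVec v)
      ≤ ρ ^ 2 * M * (S.card : ℝ) ^ 2 / N := by
  subst hC hΩ
  set D := Matrix.diagonal (fun i : Fin N => if i ∈ S then (1 : ℝ) else 0) with hD
  set Ω : Matrix (Fin N × Fin M) (Fin N × Fin M) ℝ :=
    ρ • (D ⊗ₖ (1 : Matrix (Fin M) (Fin M) ℝ)) with hΩdef
  set Ck : Matrix (Fin N × Fin M) (Fin N × Fin M) ℝ :=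
    C' ⊗ₖ (1 : Matrix (Fin M) (Fin M) ℝ) with hCk
  have hsym : Ωᵀ = Ω := by
    rw [hΩdef]
    ext ⟨i, b⟩ ⟨j, a⟩
    simp [hD, Matrix.diagonal_apply, Matrix.one_apply, eq_comm]
    split_ifs with h1 h2 <;> simp_all
  set A := Ckᵀ * Ω with hA
  have hprod : Ω * Ck * Ckᵀ * Ω = Aᵀ * A := by
    rw [hA, Matrix.transpose_mul, Matrix.transpose_transpose, hsym, Matrix.mul_assoc]
  have hquad : dotProduct v ((Ω * Ck * Ckᵀ * Ω).mulVec v)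
      = dotProduct (A.mulVec v) (A.mulVec v) := by
    rw [hprod, ← Matrix.mulVec_mulVec, dotProduct_mulVec, Matrix.vecMul_transpose]
  have hw : ∀ p : Fin N × Fin M,
      (A.mulVec v) p = ρ * ∑ i ∈ S, C' i p.1 * x i p.2 := by
    rintro ⟨j, a⟩
    rw [hA, ← Matrix.mulVec_mulVec]
    have h1 : Ω.mulVec v = fun p => ρ * (if p.1 ∈ S then x p.1 p.2 else 0) := by
      funext ⟨i, b⟩
      simp [hΩdef, Matrix.mulVec, dotProduct, Fintype.sum_prod_type, hD,
        Matrix.diagonal_apply, Matrix.one_apply, hv, ite_and, mul_ite, mul_zero,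
        Finset.sum_ite_eq, Finset.sum_ite_eq']
    rw [h1]
    simp only [Matrix.mulVec, dotProduct, hCk, Matrix.transpose_apply,
      Matrix.kroneckerMap_apply, Matrix.one_apply, Fintype.sum_prod_type,
      mul_ite, mul_zero, ite_mul, zero_mul]
    have hin : ∀ i : Fin N,
        (∑ b : Fin M, if i ∈ S then if b = a then C' i j * 1 * (ρ * x i b) else 0 else 0)
        = if i ∈ S then C' i j * (ρ * x i a) else 0 := by
      intro i
      split_ifs with h
      · simp [Finset.sum_ite_eq']
      · simp
    rw [Finset.sum_congr rfl fun i _ => hin i, Finset.sum_ite_mem, Finset.univ_inter,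
      Finset.mul_sum]
    exact Finset.sum_congr rfl fun i _ => by ring
  rw [hquad]
  have hxb : ∀ i a, |x i a| ≤ 1 := by
    intro i a
    rcases hx i a with h | h | h <;> simp_all
  have hwb : ∀ p : Fin N × Fin M, |(A.mulVec v) p| ≤ ρ * ((S.card : ℝ) / N) := by
    intro p
    rw [hw p, abs_mul, abs_of_pos hρ]
    refine mul_le_mul_of_nonneg_left ?_ hρ.le
    calc |∑ i ∈ S, C' i p.1 * x i p.2| ≤ ∑ i ∈ S, |C' i p.1 * x i p.2| :=
          Finset.abs_sum_le_sum_abs _ _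
      _ ≤ ∑ i ∈ S, C' i p.1 := by
          refine Finset.sum_le_sum fun i _ => ?_
          rw [abs_mul, abs_of_nonneg (hnn i p.1)]
          calc C' i p.1 * |x i p.2| ≤ C' i p.1 * 1 :=
                mul_le_mul_of_nonneg_left (hxb i p.2) (hnn i p.1)
            _ = C' i p.1 := mul_one _
      _ = (S.card : ℝ) / N := hunif p.1
  rcases Nat.eq_zero_or_pos N with hN | hN
  · subst hN
    have : S = ∅ := Finset.eq_empty_of_isEmpty S
    simp [this, dotProduct]
  · have hNpos : (0 : ℝ) < N := by exact_mod_cast hN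
    calc dotProduct (A.mulVec v) (A.mulVec v)
        = ∑ p : Fin N × Fin M, (A.mulVec v) p ^ 2 := by
          simp [dotProduct, sq]
      _ ≤ ∑ _p : Fin N × Fin M, (ρ * ((S.card : ℝ) / N)) ^ 2 := by
          refine Finset.sum_le_sum fun p _ => ?_
          rw [← sq_abs]
          exact pow_le_pow_left₀ (abs_nonneg _) (hwb p) 2
      _ = (N * M : ℝ) * (ρ * ((S.card : ℝ) / N)) ^ 2 := by
          simp [Finset.card_univ, mul_comm]
      _ = ρ ^ 2 * M * (S.card : ℝ) ^ 2 / N := by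
          field_simp
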